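/- Let S be a commutative semiring and A an S-semialgebra whose underlying S-semimodule is projective and uniformly finitely presented (there exist n ∈ ℕ and a surjective k-uniform S-linear map g : S^n → A whose kernel submodule is finitely generated). Then the dual A* = Hom_S(A,S) carries an S-semicoalgebra structure (A*, Δ*, ε*) where: (i) Δ* : A* → A* ⊗_S A* is the unique S-linear map such that for all f ∈ A* and a, b ∈ A, writing Δ*(f) = Σ_i f_i ⊗ g_i, one has f(a·b) = Σ_i f_i(a)·g_i(b); (ii) ε* : A* → S is given by ε*(f) = f(1_A); and Δ* is coassociative with counit ε*. -/

import Mathlib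

/-!
STATEMENT 18: Let `S` be a commutative semiring and `A` an `S`-semialgebra
whose underlying `S`-semimodule is projective and uniformly finitely
presented.  Then the dual `A* = Hom_S(A,S)` carries an `S`-semicoalgebra
structure `(A*, Δ*, ε*)`: `Δ*` is the unique `S`-linear map such that
whenever `Δ* f = ∑ fᵢ ⊗ gᵢ` one has `f (a·b) = ∑ fᵢ a · gᵢ b`; moreover `Δ*`
is coassociative with counit `ε* : f ↦ f 1`.
-/

open TensorProduct

variable (S : Type*) [CommSemiring S] (A : Type*) [Semiring A] [Algebra S A]

/-- Evaluation of an element of `A* ⊗[S] A*` at a pair `(a, b)`: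
`∑ fᵢ ⊗ gᵢ ↦ ∑ fᵢ a · gᵢ b`. -/
noncomputable def dualEvalPair (a b : A) :
    Module.Dual S A ⊗[S] Module.Dual S A →ₗ[S] S :=
  TensorProduct.lift <| LinearMap.mk₂ S (fun p q => p a * q b)
    (fun p p' q => by simp [add_mul])
    (fun s p q => by simp [smul_eq_mul, mul_assoc])
    (fun p q q' => by simp [mul_add])
    (fun s p q => by simp [smul_eq_mul, mul_left_comm])

/-- The counit `ε* : A* → S`, `f ↦ f 1`. -/
noncomputable def dualCounit : Module.Dual S A →ₗ[S] S where
  toFun f := f 1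
  map_add' f g := by simp
  map_smul' s f := by simp

/-!
For a finitely generated projective `S`-semimodule `A`, the canonical map
`A* ⊗ N → Hom(A, N)`, `f ⊗ n ↦ (a ↦ f a • n)`, is bijective (`dualTensorHom_bijective`).
Taking `N = A*`, the comultiplication `Δ*` is the preimage of the transpose of the
multiplication, `f ↦ (a ↦ (b ↦ f (a * b)))`, which gives existence and uniqueness.
Coassociativity and counitality are checked after contracting the tensor factors against
elements of `A`, where they become associativity and unitality of `A`.
-/

open TensorProduct LinearMap Module

section Contraction

variable {R M N : Type*} [CommSemiring R] [AddCommMonoid M] [Module R M]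
  [AddCommMonoid N] [Module R N]

theorem existsUnique_comp_eq_of_bijective {P : Type*} [AddCommMonoid P] [Module R P]
    {Φ : N →ₗ[R] P} (hΦ : Function.Bijective Φ) (L : M →ₗ[R] P) :
    ∃! Δ : M →ₗ[R] N, Φ ∘ₗ Δ = L := by
  let e := LinearEquiv.ofBijective Φ hΦ
  refine ⟨e.symm.toLinearMap ∘ₗ L, ?_, fun Δ hΔ => ?_⟩
  · ext m
    exact e.apply_symm_apply (L m)
  · ext m
    exact e.injective (by simp [e, ← hΔ])

theorem dualTensorHom_ext [Module.Finite R M] [Projective R M] {T T' : Dual R M ⊗[R] N}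
    (h : ∀ m, dualTensorHom R M N T m = dualTensorHom R M N T' m) : T = T' :=
  dualTensorHom_bijective.1 (LinearMap.ext h)

theorem dualTensorHom_lTensor_apply {P : Type*} [AddCommMonoid P] [Module R P]
    (φ : N →ₗ[R] P) (T : Dual R M ⊗[R] N) (m : M) :
    dualTensorHom R M P (lTensor (Dual R M) φ T) m = φ (dualTensorHom R M N T m) :=
  LinearMap.congr_fun (LinearMap.congr_fun (dualTensorHom_comp_lTensor φ) T) m

theorem dualTensorHom_assoc_tmul (V : Dual R M ⊗[R] Dual R M) (n : N) (m m' : M) :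
    dualTensorHom R M N (dualTensorHom R M (Dual R M ⊗[R] N)
        (TensorProduct.assoc R _ _ _ (V ⊗ₜ n)) m) m' = dualTensorHom R M (Dual R M) V m m' • n := by
  induction V using TensorProduct.induction_on with
  | zero => simp
  | tmul f q => simp [smul_smul]
  | add V V' hV hV' => simp [add_tmul, hV, hV', add_smul]

end Contraction

section DualComul

variable {S A}

noncomputable def mulTranspose : Dual S A →ₗ[S] A →ₗ[S] Dual S A :=
  (llcomp S A A S).compl₂ (LinearMap.mul S A)

@[simp]
theorem mulTranspose_apply (f : Dual S A) (a b : A) : mulTranspose f a b = f (a * b) := rfl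

theorem dualEvalPair_eq_dualTensorHom (a b : A) (T : Dual S A ⊗[S] Dual S A) :
    dualEvalPair S A a b T = dualTensorHom S A (Dual S A) T a b := by
  induction T using TensorProduct.induction_on with
  | zero => simp
  | tmul f q => rfl
  | add T T' hT hT' => simp [hT, hT']

theorem forall_dualEvalPair_iff (Δ : Dual S A →ₗ[S] Dual S A ⊗[S] Dual S A) :
    (∀ (a b : A) (f : Dual S A), dualEvalPair S A a b (Δ f) = f (a * b)) ↔
      dualTensorHom S A (Dual S A) ∘ₗ Δ = mulTranspose := by
  simp only [LinearMap.ext_iff, dualEvalPair_eq_dualTensorHom, comp_apply, mulTranspose_apply]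
  exact ⟨fun h f a b => h a b f, fun h a b f => h f a b⟩

theorem existsUnique_dualComul [Module.Finite S A] [Projective S A] :
    ∃! Δ : Dual S A →ₗ[S] Dual S A ⊗[S] Dual S A,
      ∀ (a b : A) (f : Dual S A), dualEvalPair S A a b (Δ f) = f (a * b) := by
  obtain ⟨Δ, hΔ, huniq⟩ := existsUnique_comp_eq_of_bijective
    (dualTensorHom_bijective (R := S) (M := A) (N := Dual S A)) mulTranspose
  exact ⟨Δ, (forall_dualEvalPair_iff Δ).2 hΔ,
    fun Δ' hΔ' => huniq Δ' ((forall_dualEvalPair_iff Δ').1 hΔ')⟩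

theorem lid_rTensor_dualCounit {N : Type*} [AddCommMonoid N] [Module S N]
    (T : Dual S A ⊗[S] N) :
    TensorProduct.lid S N (rTensor N (dualCounit S A) T) = dualTensorHom S A N T 1 := by
  induction T using TensorProduct.induction_on with
  | zero => simp
  | tmul f n => rfl
  | add T T' hT hT' => simp [hT, hT']

theorem rid_lTensor_dualCounit (T : Dual S A ⊗[S] Dual S A) (a : A) :
    TensorProduct.rid S (Dual S A) (lTensor (Dual S A) (dualCounit S A) T) a =
      dualTensorHom S A (Dual S A) T a 1 := by
  induction T using TensorProduct.induction_on with
  | zero => simp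
  | tmul f q => simp [dualCounit, mul_comm]
  | add T T' hT hT' => simp [hT, hT']

variable {Δ : Dual S A →ₗ[S] Dual S A ⊗[S] Dual S A}

theorem dualTensorHom_comul_apply (hΔ : dualTensorHom S A (Dual S A) ∘ₗ Δ = mulTranspose)
    (f : Dual S A) (a b : A) : dualTensorHom S A (Dual S A) (Δ f) a b = f (a * b) :=
  LinearMap.congr_fun (LinearMap.congr_fun (LinearMap.congr_fun hΔ f) a) b

theorem dualTensorHom_assoc_rTensor_comul {N : Type*} [AddCommMonoid N] [Module S N]
    (hΔ : dualTensorHom S A (Dual S A) ∘ₗ Δ = mulTranspose) (T : Dual S A ⊗[S] N) (a b : A) :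
    dualTensorHom S A N (dualTensorHom S A (Dual S A ⊗[S] N)
        (TensorProduct.assoc S _ _ _ (rTensor N Δ T)) a) b = dualTensorHom S A N T (a * b) := by
  induction T using TensorProduct.induction_on with
  | zero => simp
  | tmul f n =>
    rw [rTensor_tmul, dualTensorHom_assoc_tmul, dualTensorHom_comul_apply hΔ, dualTensorHom_apply]
  | add T T' hT hT' => simp [hT, hT']

theorem comul_coassoc [Module.Finite S A] [Projective S A]
    (hΔ : dualTensorHom S A (Dual S A) ∘ₗ Δ = mulTranspose) (f : Dual S A) :
    TensorProduct.assoc S _ _ _ (rTensor (Dual S A) Δ (Δ f)) = lTensor (Dual S A) Δ (Δ f) := by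
  refine dualTensorHom_ext fun a => dualTensorHom_ext fun b => LinearMap.ext fun c => ?_
  simp only [dualTensorHom_assoc_rTensor_comul hΔ, dualTensorHom_lTensor_apply,
    dualTensorHom_comul_apply hΔ, mul_assoc]

theorem lid_rTensor_dualCounit_comul (hΔ : dualTensorHom S A (Dual S A) ∘ₗ Δ = mulTranspose)
    (f : Dual S A) :
    TensorProduct.lid S (Dual S A) (rTensor (Dual S A) (dualCounit S A) (Δ f)) = f := by
  ext b
  rw [lid_rTensor_dualCounit, dualTensorHom_comul_apply hΔ, one_mul]

theorem rid_lTensor_dualCounit_comul (hΔ : dualTensorHom S A (Dual S A) ∘ₗ Δ = mulTranspose)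
    (f : Dual S A) :
    TensorProduct.rid S (Dual S A) (lTensor (Dual S A) (dualCounit S A) (Δ f)) = f := by
  ext a
  rw [rid_lTensor_dualCounit, dualTensorHom_comul_apply hΔ, mul_one]

end DualComul

theorem dual_is_semicoalgebra_of_projective_of_ufp
    -- `A` is projective as an `S`-semimodule
    (hproj : Module.Projective S A)
    -- `A` is uniformly finitely presented as an `S`-semimodule
    (hufp : ∃ (n : ℕ) (g : (Fin n → S) →ₗ[S] A),
      Function.Surjective g ∧
      (∀ x y : Fin n → S, g x = g y →
        ∃ k k' : Fin n → S, g k = 0 ∧ g k' = 0 ∧ x + k = y + k') ∧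
      (LinearMap.ker g).FG) :
    -- (i) there is a unique `Δ* : A* → A* ⊗ A*` with
    --     `f (a·b) = ∑ fᵢ a · gᵢ b` whenever `Δ* f = ∑ fᵢ ⊗ gᵢ` …
    (∃! Δ : Module.Dual S A →ₗ[S] Module.Dual S A ⊗[S] Module.Dual S A,
      ∀ (a b : A) (f : Module.Dual S A),
        dualEvalPair S A a b (Δ f) = f (a * b)) ∧
    -- … and (ii) any such `Δ*` is coassociative with counit `ε* : f ↦ f 1`
    (∀ Δ : Module.Dual S A →ₗ[S] Module.Dual S A ⊗[S] Module.Dual S A,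
      (∀ (a b : A) (f : Module.Dual S A),
        dualEvalPair S A a b (Δ f) = f (a * b)) →
      (∀ f, (TensorProduct.assoc S _ _ _)
          (LinearMap.rTensor (Module.Dual S A) Δ (Δ f)) =
        LinearMap.lTensor (Module.Dual S A) Δ (Δ f)) ∧
      (∀ f, (TensorProduct.lid S (Module.Dual S A))
          (LinearMap.rTensor (Module.Dual S A) (dualCounit S A) (Δ f)) = f) ∧
      (∀ f, (TensorProduct.rid S (Module.Dual S A))
          (LinearMap.lTensor (Module.Dual S A) (dualCounit S A) (Δ f)) = f)) := by
  obtain ⟨_, g, hg, -, -⟩ := hufp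
  have : Module.Finite S A := .of_surjective g hg
  refine ⟨existsUnique_dualComul, fun Δ hΔ => ?_⟩
  rw [forall_dualEvalPair_iff] at hΔ
  exact ⟨comul_coassoc hΔ, lid_rTensor_dualCounit_comul hΔ, rid_lTensor_dualCounit_comul hΔ⟩
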